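/- arXiv:2303.04014 — 8 statements merged into one kernel-verified Lean document; each statement's English description precedes it below -/
import Mathlib

section
/- Let k : ℝ → ℝ be a monotone increasing kernel, C₁ a constant, and x, y integrable functions on [0,T] with y(t) = C₁ + ∫₀ᵗ k(y(τ)) dτ for all t, and x(t) > C₁ + ∫₀ᵗ k(x(τ)) dτ for all t > 0 (with equality at t = 0). Suppose moreover there exists δ' > 0 such that y(t') < x(t') for all t' ∈ (0, δ'). Then y(t) ≤ x(t) for all t in [0,T], with equality only at t = 0. -/
open MeasureTheory Set

/-- Volterra comparison theorem (Theorem on Volterra integral inequalities). -/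
theorem volterra_comparison
    (k : ℝ → ℝ) (hk : Monotone k)
    (C₁ T : ℝ) (hT : 0 < T)
    (x y : ℝ → ℝ)
    (hxc : ContinuousOn x (Icc 0 T)) (hyc : ContinuousOn y (Icc 0 T))
    (hxint : IntegrableOn (fun τ => k (x τ)) (Icc 0 T))
    (hyint : IntegrableOn (fun τ => k (y τ)) (Icc 0 T))
    (hy : ∀ t ∈ Icc (0:ℝ) T, y t = C₁ + ∫ τ in (0:ℝ)..t, k (y τ))
    (hx0 : x 0 = C₁)
    (hx : ∀ t ∈ Ioc (0:ℝ) T, x t > C₁ + ∫ τ in (0:ℝ)..t, k (x τ))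
    (δ' : ℝ) (hδ' : 0 < δ')
    (hinit : ∀ t' ∈ Ioo (0:ℝ) δ', t' ≤ T → y t' < x t') :
    ∀ t ∈ Icc (0:ℝ) T, y t ≤ x t ∧ (y t = x t → t = 0) := by
  have hy0 : y 0 = C₁ := by
    have := hy 0 ⟨le_refl 0, hT.le⟩
    simpa using this
  -- Key: strict inequality on (0, T]
  have key : ∀ t ∈ Ioc (0:ℝ) T, y t < x t := by
    by_contra h
    push_neg at h
    obtain ⟨t₁, ht₁, hle₁⟩ := h
    -- the bad set
    set S : Set ℝ := {t ∈ Icc 0 T | x t ≤ y t ∧ δ' ≤ t} with hS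
    have hSsub : S ⊆ Icc 0 T := fun t ht => ht.1
    have hSclosed : IsClosed S := by
      have h1 : IsClosed {t ∈ Icc (0:ℝ) T | x t ≤ y t} :=
        isClosed_Icc.isClosed_le hxc hyc
      have : S = {t ∈ Icc (0:ℝ) T | x t ≤ y t} ∩ Ici δ' := by
        ext t; simp [hS, and_assoc]
      rw [this]
      exact h1.inter isClosed_Ici
    have ht₁S : t₁ ∈ S := by
      refine ⟨⟨ht₁.1.le, ht₁.2⟩, hle₁, ?_⟩
      by_contra hlt
      push_neg at hlt
      exact absurd hle₁ (not_le.mpr (hinit t₁ ⟨ht₁.1, hlt⟩ ht₁.2))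
    have hSne : S.Nonempty := ⟨t₁, ht₁S⟩
    have hbdd : BddBelow S := ⟨0, fun t ht => ht.1.1⟩
    set t₀ := sInf S with ht₀def
    have ht₀S : t₀ ∈ S := hSclosed.csInf_mem hSne hbdd
    have ht₀δ : δ' ≤ t₀ := ht₀S.2.2
    have ht₀pos : 0 < t₀ := lt_of_lt_of_le hδ' ht₀δ
    have ht₀T : t₀ ≤ T := ht₀S.1.2
    -- strict inequality on (0, t₀)
    have hlt : ∀ τ ∈ Ioo (0:ℝ) t₀, y τ < x τ := by
      intro τ hτ
      rcases lt_or_ge τ δ' with hc | hc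
      · exact hinit τ ⟨hτ.1, hc⟩ (hτ.2.le.trans ht₀T)
      · by_contra hge
        push_neg at hge
        have : τ ∈ S := ⟨⟨hτ.1.le, hτ.2.le.trans ht₀T⟩, hge, hc⟩
        exact absurd (csInf_le hbdd this) (not_le.mpr hτ.2)
    -- integral comparison
    have hIccsub : Icc (0:ℝ) t₀ ⊆ Icc 0 T := Icc_subset_Icc le_rfl ht₀T
    have hIoosub : Ioo (0:ℝ) t₀ ⊆ Icc 0 T := Ioo_subset_Icc_self.trans hIccsub
    have hint : (∫ τ in (0:ℝ)..t₀, k (y τ)) ≤ ∫ τ in (0:ℝ)..t₀, k (x τ) := by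
      rw [intervalIntegral.integral_of_le ht₀pos.le,
          intervalIntegral.integral_of_le ht₀pos.le,
          ← MeasureTheory.Measure.restrict_congr_set Ioo_ae_eq_Ioc,
          ]
      refine setIntegral_mono_on (hyint.mono_set hIoosub) (hxint.mono_set hIoosub)
        measurableSet_Ioo ?_
      intro τ hτ
      exact hk (hlt τ hτ).le
    have hyt₀ := hy t₀ ⟨ht₀pos.le, ht₀T⟩
    have hxt₀ := hx t₀ ⟨ht₀pos, ht₀T⟩
    have : y t₀ < x t₀ := by
      calc y t₀ = C₁ + ∫ τ in (0:ℝ)..t₀, k (y τ) := hyt₀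
        _ ≤ C₁ + ∫ τ in (0:ℝ)..t₀, k (x τ) := by linarith
        _ < x t₀ := hxt₀
    exact absurd ht₀S.2.1 (not_le.mpr this)
  intro t ht
  rcases eq_or_lt_of_le ht.1 with h0 | hpos
  · constructor
    · rw [← h0, hy0, hx0]
    · intro _; exact h0.symm
  · have := key t ⟨hpos, ht.2⟩
    exact ⟨this.le, fun h => absurd h (ne_of_lt this)⟩
end

section
/- Let K ⊆ ℝⁿ be closed, α > 0, and x a point with R_K(x) > α. Then the set of closest points of x in K^{⊕α} is the image of the set of closest points of x in K under the dilation centered at x with ratio (R_K(x) − α)/R_K(x); i.e., Θ_{K^{⊕α}}(x) − x = ((R_K(x) − α)/R_K(x)) · (Θ_K(x) − x). -/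
open Metric

/-- The set of closest points of `x` in `K`. -/
def closestPoints {n : ℕ} (K : Set (EuclideanSpace ℝ (Fin n)))
    (x : EuclideanSpace ℝ (Fin n)) : Set (EuclideanSpace ℝ (Fin n)) :=
  {y ∈ K | dist x y = Metric.infDist x K}

/-- The set of closest points of `x` in the offset `K^{⊕α}` is the image of the set of
closest points of `x` in `K` under the dilation centered at `x` with ratio
`(R_K(x) - α)/R_K(x)`. -/
theorem closestPoints_offset_eq_dilation
    {n : ℕ} (K : Set (EuclideanSpace ℝ (Fin n)))
    (hK : IsClosed K) (hKne : K.Nonempty)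
    (α : ℝ) (hα : 0 < α) (x : EuclideanSpace ℝ (Fin n))
    (hx : α < Metric.infDist x K) :
    (fun y => y - x) '' closestPoints {z | Metric.infDist z K ≤ α} x
      = (fun v => ((Metric.infDist x K - α) / Metric.infDist x K) • v) ''
          ((fun y => y - x) '' closestPoints K x) := by
  set R := Metric.infDist x K with hRdef
  have hR0 : (0:ℝ) < R := hα.trans hx
  set t := (R - α) / R with htdef
  have htR : t * R = R - α := div_mul_cancel₀ _ hR0.ne'
  have ht0 : 0 ≤ t := div_nonneg (by linarith) hR0.le
  have ht1 : t ≤ 1 := by rw [htdef, div_le_one hR0]; linarith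
  set K' : Set (EuclideanSpace ℝ (Fin n)) := {z | Metric.infDist z K ≤ α} with hK'def
  -- for any closest point y of x in K, the dilated point lies in K' at distance R - α
  have hconstr : ∀ y ∈ closestPoints K x,
      (x + t • (y - x)) ∈ K' ∧ dist x (x + t • (y - x)) = R - α ∧
        dist (x + t • (y - x)) y = α := by
    intro y hy
    obtain ⟨hyK, hyd⟩ := hy
    have hxy : dist x y = R := hyd
    have hnyx : ‖y - x‖ = R := by rw [← dist_eq_norm, dist_comm]; exact hxy
    have h1 : dist x (x + t • (y - x)) = R - α := by
      rw [dist_self_add_right, norm_smul, Real.norm_of_nonneg ht0, hnyx]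
      exact htR
    have h2 : dist (x + t • (y - x)) y = α := by
      have heq : x + t • (y - x) - y = (t - 1) • (y - x) := by
        rw [sub_smul, one_smul]; abel
      rw [dist_eq_norm, heq, norm_smul, hnyx, Real.norm_eq_abs,
        abs_of_nonpos (by linarith)]
      nlinarith [htR]
    refine ⟨?_, h1, h2⟩
    show Metric.infDist (x + t • (y - x)) K ≤ α
    calc Metric.infDist (x + t • (y - x)) K ≤ dist (x + t • (y - x)) y :=
          Metric.infDist_le_dist_of_mem hyK
      _ = α := h2
  -- lower bound on distances to K'
  have hlow : ∀ z ∈ K', R - α ≤ dist x z := by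
    intro z hz
    have h1 : R ≤ Metric.infDist z K + dist x z := Metric.infDist_le_infDist_add_dist
    have h2 : Metric.infDist z K ≤ α := hz
    linarith
  -- the infDist to K' equals R - α
  obtain ⟨y₀, hy₀K, hy₀d⟩ := hK.exists_infDist_eq_dist hKne x
  have hy₀ : y₀ ∈ closestPoints K x := ⟨hy₀K, hy₀d.symm⟩
  obtain ⟨hz₀K', hz₀d, -⟩ := hconstr y₀ hy₀
  have hK'ne : K'.Nonempty := ⟨_, hz₀K'⟩
  have hinfK' : Metric.infDist x K' = R - α := by
    refine le_antisymm ?_ ?_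
    · calc Metric.infDist x K' ≤ dist x (x + t • (y₀ - x)) :=
            Metric.infDist_le_dist_of_mem hz₀K'
        _ = R - α := hz₀d
    · by_contra h
      push_neg at h
      obtain ⟨z, hzK', hzd⟩ := (Metric.infDist_lt_iff hK'ne).mp h
      exact absurd (hlow z hzK') (by linarith)
  -- main set equality
  ext v
  simp only [Set.mem_image, closestPoints, Set.mem_sep_iff, Set.mem_setOf_eq]
  constructor
  · rintro ⟨z, ⟨hzK', hzd⟩, rfl⟩
    -- z is a closest point of x in K'
    rw [hinfK'] at hzd
    obtain ⟨w, hwK, hwd⟩ := hK.exists_infDist_eq_dist hKne z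
    have hzw : dist z w ≤ α := by rw [← hwd]; exact hzK'
    have hRw : R ≤ dist x w := Metric.infDist_le_dist_of_mem hwK
    have htri : dist x w ≤ dist x z + dist z w := dist_triangle x z w
    have hxw : dist x w = R := by linarith
    have hzw' : dist z w = α := by linarith
    -- z lies on the segment from x to w at parameter t
    have hline : z = AffineMap.lineMap x w t := by
      apply eq_lineMap_of_dist_eq_mul_of_dist_eq_mul
      · rw [hxw, hzd]; linarith [htR]
      · rw [hxw, hzw']; nlinarith [htR]
    have hzx : z - x = t • (w - x) := by
      rw [hline]
      simp [AffineMap.lineMap_apply, vsub_eq_sub, vadd_eq_add]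
    exact ⟨w - x, ⟨w, ⟨hwK, hxw.trans rfl⟩, rfl⟩, hzx.symm⟩
  · rintro ⟨u, ⟨y, hy, rfl⟩, rfl⟩
    obtain ⟨hzK', hzd, -⟩ := hconstr y hy
    refine ⟨x + t • (y - x), ⟨hzK', ?_⟩, by abel⟩
    rw [hzd, hinfK']
end

section
/- Let K ⊆ ℝⁿ be closed, α > 0, and x with R_K(x) > α. Then 𝓕_{K^{⊕α}}(x) = ((R_K(x) − α)/R_K(x)) · 𝓕_K(x), where 𝓕_K(x) is the radius of the smallest enclosing ball of the set of closest points Θ_K(x). -/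
open Metric Pointwise

/-- The radius of the smallest enclosing ball of a (bounded) set `S`. -/
noncomputable def encRadius {n : ℕ} (S : Set (EuclideanSpace ℝ (Fin n))) : ℝ :=
  ⨅ c : EuclideanSpace ℝ (Fin n), sSup ((fun y => dist c y) '' S)

/-- `𝓕_{K^{⊕α}}(x) = ((R_K(x) − α)/R_K(x)) · 𝓕_K(x)` for `R_K(x) > α`. -/
theorem encRadius_closestPoints_offset
    {n : ℕ} (K : Set (EuclideanSpace ℝ (Fin n)))
    (hK : IsClosed K) (hKne : K.Nonempty)
    (α : ℝ) (hα : 0 < α) (x : EuclideanSpace ℝ (Fin n))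
    (hx : α < Metric.infDist x K) :
    encRadius (closestPoints {z | Metric.infDist z K ≤ α} x)
      = ((Metric.infDist x K - α) / Metric.infDist x K) *
          encRadius (closestPoints K x) := by
  set R : ℝ := Metric.infDist x K with hRdef
  have hR0 : 0 < R := hα.trans hx
  set t : ℝ := (R - α) / R with htdef
  have ht0 : 0 < t := div_pos (by linarith) hR0
  set h : EuclideanSpace ℝ (Fin n) → EuclideanSpace ℝ (Fin n) :=
    fun y => AffineMap.lineMap x y t with hhdef
  set g : EuclideanSpace ℝ (Fin n) → EuclideanSpace ℝ (Fin n) :=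
    fun y => AffineMap.lineMap x y t⁻¹ with hgdef
  have hgh : ∀ c, h (g c) = c := by
    intro c
    simp only [hhdef, hgdef, AffineMap.lineMap_apply_module']
    rw [add_sub_cancel_right, smul_smul, mul_inv_cancel₀ ht0.ne', one_smul,
      sub_add_cancel]
  have hhg : ∀ c, g (h c) = c := by
    intro c
    simp only [hhdef, hgdef, AffineMap.lineMap_apply_module']
    rw [add_sub_cancel_right, smul_smul, inv_mul_cancel₀ ht0.ne', one_smul,
      sub_add_cancel]
  have hgsurj : Function.Surjective g := fun c => ⟨h c, hhg c⟩
  have hdist_hx : ∀ y, dist x (h y) = t * dist x y := by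
    intro y
    rw [hhdef, dist_left_lineMap, Real.norm_eq_abs, abs_of_pos ht0]
  have hdist_hy : ∀ y, dist (h y) y = (α / R) * dist x y := by
    intro y
    have h1t : (1 : ℝ) - t = α / R := by rw [htdef]; field_simp; ring
    rw [hhdef, dist_lineMap_right, Real.norm_eq_abs, h1t,
      abs_of_nonneg (by positivity)]
  have hdist_hh : ∀ c y, dist (h c) (h y) = t * dist c y := by
    intro c y
    simp only [hhdef, AffineMap.lineMap_apply_module', dist_eq_norm]
    have : t • (c - x) + x - (t • (y - x) + x) = t • (c - y) := by module
    rw [this, norm_smul, Real.norm_eq_abs, abs_of_pos ht0]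
  set K' : Set (EuclideanSpace ℝ (Fin n)) := {z | Metric.infDist z K ≤ α}
    with hK'def
  have hK'ne : K'.Nonempty := by
    obtain ⟨y, hy⟩ := hKne
    exact ⟨y, by simp [hK'def, infDist_zero_of_mem hy, hα.le]⟩
  have hmem : ∀ y ∈ closestPoints K x, h y ∈ K' ∧ dist x (h y) = R - α := by
    rintro y ⟨hyK, hyd⟩
    have hyR : dist x y = R := by rw [hyd, ← hRdef]
    refine ⟨?_, ?_⟩
    · show Metric.infDist (h y) K ≤ α
      calc Metric.infDist (h y) K ≤ dist (h y) y := infDist_le_dist_of_mem hyK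
        _ = (α / R) * R := by rw [hdist_hy, hyR]
        _ = α := by field_simp
    · rw [hdist_hx, hyR, htdef, div_mul_cancel₀ _ hR0.ne']
  obtain ⟨y₀, hy₀K, hy₀d⟩ := hK.exists_infDist_eq_dist hKne x
  have hy₀ : y₀ ∈ closestPoints K x := ⟨hy₀K, hy₀d.symm⟩
  have hlow : ∀ z ∈ K', R - α ≤ dist x z := by
    intro z hz
    have h1 : Metric.infDist x K ≤ Metric.infDist z K + dist x z :=
      infDist_le_infDist_add_dist
    have h2 : Metric.infDist z K ≤ α := hz
    rw [← hRdef] at h1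
    linarith
  have hinfK' : Metric.infDist x K' = R - α := by
    have := hK'ne.to_subtype
    refine le_antisymm ?_ (by rw [infDist_eq_iInf]; exact le_ciInf fun z => hlow z z.2)
    obtain ⟨hz, hdz⟩ := hmem y₀ hy₀
    calc Metric.infDist x K' ≤ dist x (h y₀) := infDist_le_dist_of_mem hz
      _ = R - α := hdz
  have hset : closestPoints K' x = h '' closestPoints K x := by
    ext z
    constructor
    · rintro ⟨hzK', hzd⟩
      rw [hinfK'] at hzd
      have hzα : Metric.infDist z K ≤ α := hzK'
      obtain ⟨y, hyK, hyd⟩ := hK.exists_infDist_eq_dist hKne z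
      have hRy : R ≤ dist x y := by rw [hRdef]; exact infDist_le_dist_of_mem hyK
      have htri : dist x y ≤ dist x z + dist z y := dist_triangle x z y
      have hzy : dist z y ≤ α := by rw [← hyd]; exact hzα
      have hxy : dist x y = R := le_antisymm (by rw [hzd] at htri; linarith) hRy
      have hzyα : dist z y = α := by
        rw [hxy, hzd] at htri; linarith
      have heq : dist x z + dist z y = dist x y := by
        rw [hxy, hzd, hzyα]; ring
      have hw : Wbtw ℝ x z y := dist_add_dist_eq_iff.1 heq
      obtain ⟨s, hs01, hsz⟩ := hw
      have hsz' : AffineMap.lineMap x y s = z := hsz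
      have hdxz : dist x z = s * R := by
        rw [← hsz', dist_left_lineMap, hxy, Real.norm_eq_abs,
          abs_of_nonneg hs01.1]
      have hst : s = t := by
        rw [htdef, eq_div_iff hR0.ne']
        rw [hzd] at hdxz
        linarith
      exact ⟨y, ⟨hyK, hxy.trans hRdef⟩, by simp only [hhdef]; rw [← hst]; exact hsz'⟩
    · rintro ⟨y, hy, rfl⟩
      obtain ⟨hz, hdz⟩ := hmem y hy
      exact ⟨hz, by rw [hdz, hinfK']⟩
  rw [hset]
  unfold encRadius
  have key : ∀ c : EuclideanSpace ℝ (Fin n),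
      sSup ((fun y => dist c y) '' (h '' closestPoints K x))
      = t * sSup ((fun y => dist (g c) y) '' closestPoints K x) := by
    intro c
    rw [Set.image_image]
    have himg : (fun y => dist c (h y)) '' closestPoints K x
        = t • ((fun y => dist (g c) y) '' closestPoints K x) := by
      rw [← Set.image_smul, Set.image_image]
      apply congrArg (· '' closestPoints K x)
      funext y
      show dist c (h y) = t • dist (g c) y
      rw [smul_eq_mul, ← hdist_hh, hgh]
    rw [himg, Real.sSup_smul_of_nonneg ht0.le, smul_eq_mul]
  simp only [key]
  rw [Real.mul_iInf_of_nonneg ht0.le]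
  exact hgsurj.iInf_comp fun d =>
    t * sSup ((fun y => dist d y) '' closestPoints K x)
end

section
/- Let K ⊆ ℝⁿ be closed with bounded complement, and let λ > α > 0. Then Ax_λ(K) ⊆ Ax^α_{λ−α}(K) ⊆ Ax_{λ−α}(K), where Ax_λ(K) = {x : 𝓕_K(x) ≥ λ} and Ax^α_μ(K) = {x : 𝓕_{K^{⊕α}}(x) ≥ μ}. -/
open Metric Pointwise

/-- `𝓕_K(x)`: the radius of the smallest enclosing ball of the closest points of `x` in `K`. -/
noncomputable def fK {n : ℕ} (K : Set (EuclideanSpace ℝ (Fin n)))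
    (x : EuclideanSpace ℝ (Fin n)) : ℝ :=
  encRadius (closestPoints K x)

/-- The `λ`-medial axis `Ax_λ(K) = {x : 𝓕_K(x) ≥ λ}`. -/
def medialAxis {n : ℕ} (K : Set (EuclideanSpace ℝ (Fin n))) (lam : ℝ) :
    Set (EuclideanSpace ℝ (Fin n)) :=
  {x | lam ≤ fK K x}

/-- The `(λ,α)`-medial axis `Ax^α_λ(K) = Ax_λ(K^{⊕α})`. -/
def medialAxisA {n : ℕ} (K : Set (EuclideanSpace ℝ (Fin n))) (lam α : ℝ) :
    Set (EuclideanSpace ℝ (Fin n)) :=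
  medialAxis {z | Metric.infDist z K ≤ α} lam

section Aux

variable {n : ℕ}

local notation "E" => EuclideanSpace ℝ (Fin n)

lemma bddAbove_dist_image {S : Set E} (hS : Bornology.IsBounded S) (c : E) :
    BddAbove ((fun y => dist c y) '' S) := by
  obtain ⟨r, hr⟩ := hS.subset_closedBall c
  exact ⟨r, by rintro - ⟨y, hy, rfl⟩; simpa [dist_comm] using hr hy⟩

lemma bddBelow_sup_dist {S : Set E} (hS : Bornology.IsBounded S) :
    BddBelow (Set.range fun c : E => sSup ((fun y => dist c y) '' S)) := by
  refine ⟨0, ?_⟩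
  rintro - ⟨c, rfl⟩
  rcases S.eq_empty_or_nonempty with rfl | ⟨y, hy⟩
  · simp [Real.sSup_empty]
  · exact le_trans dist_nonneg (le_csSup (bddAbove_dist_image hS c) ⟨y, hy, rfl⟩)

lemma encRadius_le_sup {S : Set E} (hS : Bornology.IsBounded S) (c : E) :
    encRadius S ≤ sSup ((fun y => dist c y) '' S) :=
  ciInf_le (bddBelow_sup_dist hS) c

lemma encRadius_nonneg {S : Set E} (hS : Bornology.IsBounded S) (hne : S.Nonempty) :
    0 ≤ encRadius S := by
  refine le_ciInf fun c => ?_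
  obtain ⟨y, hy⟩ := hne
  exact le_trans dist_nonneg (le_csSup (bddAbove_dist_image hS c) ⟨y, hy, rfl⟩)

/-- Scaling of the enclosing radius under a homothety. -/
lemma encRadius_image_lineMap (x : E) {t : ℝ} (ht : 0 < t) (S : Set E) :
    encRadius ((fun y => AffineMap.lineMap x y t) '' S) = t * encRadius S := by
  set h : E → E := fun y => AffineMap.lineMap x y t with hh
  have hd : ∀ a b : E, dist (h a) (h b) = t * dist a b := by
    intro a b
    have h1 : h a - h b = t • (a - b) := by
      simp only [hh, AffineMap.lineMap_apply, vsub_eq_sub, vadd_eq_add, smul_sub]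
      abel
    rw [dist_eq_norm, h1, norm_smul, Real.norm_eq_abs, abs_of_nonneg ht.le, dist_eq_norm]
  have hsurj : Function.Surjective h := by
    intro y
    refine ⟨AffineMap.lineMap x y t⁻¹, ?_⟩
    simp only [hh, AffineMap.lineMap_apply, vsub_eq_sub, vadd_eq_add, add_sub_cancel_right,
      smul_smul, mul_inv_cancel₀ ht.ne']
    simp
  have key : ∀ c : E, sSup ((fun y => dist (h c) y) '' (h '' S))
      = t * sSup ((fun y => dist c y) '' S) := by
    intro c
    have h2 : (fun y => dist (h c) y) '' (h '' S) = (fun y => t * dist c y) '' S := by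
      rw [Set.image_image]
      exact Set.image_congr fun y _ => hd c y
    have h3 : (fun y => t * dist c y) '' S = t • ((fun y => dist c y) '' S) := by
      rw [← Set.image_smul, Set.image_image]
      simp [smul_eq_mul]
    rw [h2, h3, Real.sSup_smul_of_nonneg ht.le, smul_eq_mul]
  calc encRadius (h '' S)
      = ⨅ c : E, sSup ((fun y => dist (h c) y) '' (h '' S)) := by
        rw [encRadius, iInf, iInf, ← hsurj.range_comp
          (fun c => sSup ((fun y => dist c y) '' (h '' S)))]
        rfl
    _ = ⨅ c : E, t * sSup ((fun y => dist c y) '' S) := by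
        exact iInf_congr key
    _ = t * encRadius S := (Real.mul_iInf_of_nonneg ht.le _).symm

end Aux

/-- `Ax_λ(K) ⊆ Ax^α_{λ−α}(K) ⊆ Ax_{λ−α}(K)` for `λ > α > 0`. -/
theorem medialAxis_subset_medialAxisA_subset
    {n : ℕ} (K : Set (EuclideanSpace ℝ (Fin n)))
    (hK : IsClosed K) (hKc : Bornology.IsBounded Kᶜ)
    (α lam : ℝ) (hα : 0 < α) (hlam : α < lam) :
    medialAxis K lam ⊆ medialAxisA K (lam - α) α ∧
      medialAxisA K (lam - α) α ⊆ medialAxis K (lam - α) := by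
  classical
  set Kα : Set (EuclideanSpace ℝ (Fin n)) := {z | Metric.infDist z K ≤ α} with hKα
  -- trivial case: K empty
  rcases K.eq_empty_or_nonempty with rfl | hKne
  · constructor
    · intro x hx
      simp only [medialAxis, Set.mem_setOf_eq] at hx
      have hfK : fK (∅ : Set (EuclideanSpace ℝ (Fin n))) x = 0 := by
        have h0 : closestPoints (∅ : Set (EuclideanSpace ℝ (Fin n))) x = ∅ := by
          ext y; simp [closestPoints]
        simp [fK, h0, encRadius, Real.sSup_empty, ciInf_const]
      rw [hfK] at hx; linarith
    · intro x hx
      simp only [medialAxisA, medialAxis, Set.mem_setOf_eq] at hx ⊢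
      have hKαu : {z : EuclideanSpace ℝ (Fin n) | Metric.infDist z (∅ : Set _) ≤ α}
          = Set.univ := by
        ext z; simp [Metric.infDist_empty, hα.le]
      have hinf : Metric.infDist x (Set.univ : Set (EuclideanSpace ℝ (Fin n))) = 0 :=
        Metric.infDist_zero_of_mem (Set.mem_univ x)
      have hcp : closestPoints (Set.univ : Set (EuclideanSpace ℝ (Fin n))) x = {x} := by
        ext y
        simp only [closestPoints, Set.mem_setOf_eq, Set.mem_univ, true_and, hinf,
          dist_eq_zero, Set.mem_singleton_iff]
        exact eq_comm
      have hbd : Bornology.IsBounded ({x} : Set (EuclideanSpace ℝ (Fin n))) :=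
        (Set.finite_singleton x).isBounded
      have h1 : fK (Set.univ : Set (EuclideanSpace ℝ (Fin n))) x ≤ 0 := by
        have h2 := encRadius_le_sup hbd x
        simp only [Set.image_singleton, dist_self, csSup_singleton] at h2
        rw [fK, hcp]
        exact h2
      rw [hKαu] at hx
      exfalso
      linarith
  -- main case: K nonempty
  have hKαne : Kα.Nonempty := hKne.mono fun z hz => by
    simp [hKα, Metric.infDist_zero_of_mem hz, hα.le]
  have hKαcl : IsClosed Kα := isClosed_le (Metric.continuous_infDist_pt K) continuous_const
  -- basic facts about closest point sets
  have cp_bounded : ∀ (L : Set (EuclideanSpace ℝ (Fin n))) (x : EuclideanSpace ℝ (Fin n)),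
      Bornology.IsBounded (closestPoints L x) := by
    intro L x
    refine (Metric.isBounded_closedBall (x := x) (r := Metric.infDist x L)).subset ?_
    rintro y ⟨-, hy⟩
    simpa [Metric.mem_closedBall, dist_comm] using hy.le
  have cp_nonempty : ∀ (L : Set (EuclideanSpace ℝ (Fin n))), IsClosed L → L.Nonempty →
      ∀ x : EuclideanSpace ℝ (Fin n), (closestPoints L x).Nonempty := by
    intro L hL hLne x
    obtain ⟨y, hyL, hy⟩ := hL.exists_infDist_eq_dist hLne x
    exact ⟨y, hyL, hy.symm⟩
  have fK_le_infDist : ∀ (L : Set (EuclideanSpace ℝ (Fin n))), IsClosed L → L.Nonempty →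
      ∀ x : EuclideanSpace ℝ (Fin n), fK L x ≤ Metric.infDist x L := by
    intro L hL hLne x
    obtain ⟨y, hy⟩ := cp_nonempty L hL hLne x
    have h1 : fK L x ≤ sSup ((fun y => dist x y) '' closestPoints L x) :=
      encRadius_le_sup (cp_bounded L x) x
    have h3 : (fun y => dist x y) '' closestPoints L x = {Metric.infDist x L} := by
      apply Set.Subset.antisymm
      · rintro - ⟨z, ⟨-, hz⟩, rfl⟩; exact hz
      · rintro - rfl; exact ⟨y, hy, hy.2⟩
    rw [h3, csSup_singleton] at h1
    exact h1
  -- the key scaling identity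
  have key : ∀ x : EuclideanSpace ℝ (Fin n), α < Metric.infDist x K →
      fK Kα x = (Metric.infDist x K - α) / Metric.infDist x K * fK K x := by
    intro x hR
    set R := Metric.infDist x K with hRdef
    have hR0 : 0 < R := hα.trans hR
    set t : ℝ := (R - α) / R with htdef
    have ht0 : 0 < t := div_pos (by linarith) hR0
    have htR : t * R = R - α := div_mul_cancel₀ _ hR0.ne'
    have ht1 : t ≤ 1 := div_le_one_of_le₀ (by linarith) hR0.le
    have h1t : (0:ℝ) ≤ 1 - t := by linarith
    have h1tR : (1 - t) * R = α := by
      have h : (1 - t) * R = R - t * R := by ring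
      rw [h, htR]; ring
    set h : EuclideanSpace ℝ (Fin n) → EuclideanSpace ℝ (Fin n) :=
      fun y => AffineMap.lineMap x y t with hh
    have hdxh : ∀ y, dist x (h y) = t * dist x y := by
      intro y
      rw [dist_comm, hh]
      simpa [Real.norm_eq_abs, abs_of_nonneg ht0.le] using dist_lineMap_left x y t
    have hdyh : ∀ y, dist (h y) y = (1 - t) * dist x y := by
      intro y
      rw [hh]
      simpa [Real.norm_eq_abs, abs_of_nonneg h1t] using dist_lineMap_right x y t
    -- infDist x Kα = R - α
    have hlow : ∀ z ∈ Kα, R - α ≤ dist x z := by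
      intro z hz
      have h2 := Metric.infDist_le_infDist_add_dist (x := x) (y := z) (s := K)
      have hz' : Metric.infDist z K ≤ α := hz
      linarith
    have hinfKα : Metric.infDist x Kα = R - α := by
      obtain ⟨y, hyK, hyd⟩ := cp_nonempty K hK hKne x
      have hymem : h y ∈ Kα := by
        have h2 : Metric.infDist (h y) K ≤ dist (h y) y :=
          Metric.infDist_le_dist_of_mem hyK
        have hd : dist (h y) y = α := by rw [hdyh y, hyd, ← hRdef, h1tR]
        exact le_trans h2 hd.le
      refine le_antisymm ?_ ?_
      · have h2 := Metric.infDist_le_dist_of_mem hymem (x := x)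
        rwa [hdxh y, hyd, ← hRdef, htR] at h2
      · by_contra hcon
        push_neg at hcon
        obtain ⟨z, hzKα, hzd⟩ := (Metric.infDist_lt_iff hKαne).mp hcon
        exact absurd hzd (not_lt.mpr (hlow z hzKα))
    -- closest points in Kα are the homothety image of closest points in K
    have hcp : closestPoints Kα x = h '' closestPoints K x := by
      ext p
      constructor
      · rintro ⟨hpKα, hpd⟩
        have hdxp : dist x p = R - α := by rw [hpd, hinfKα]
        obtain ⟨y, hyK, hyd⟩ := hK.exists_infDist_eq_dist hKne p
        have hyα : dist p y ≤ α := by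
          rw [← hyd]; exact hpKα
        have hxyR : dist x y = R := by
          refine le_antisymm ?_ (Metric.infDist_le_dist_of_mem hyK)
          calc dist x y ≤ dist x p + dist p y := dist_triangle x p y
            _ ≤ (R - α) + α := by linarith
            _ = R := by ring
        have hpy : dist p y = α := by
          have h2 : R ≤ dist x p + dist p y := by
            rw [← hxyR]; exact dist_triangle x p y
          have h3 : α ≤ dist p y := by linarith
          exact le_antisymm hyα h3
        have hline : p = AffineMap.lineMap x y t := by
          refine eq_lineMap_of_dist_eq_mul_of_dist_eq_mul ?_ ?_
          · rw [hdxp, hxyR, htR]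
          · rw [hpy, hxyR, h1tR]
        exact ⟨y, ⟨hyK, hxyR⟩, hline.symm⟩
      · rintro ⟨y, ⟨hyK, hyd⟩, rfl⟩
        have hd : dist (h y) y = α := by rw [hdyh y, hyd, ← hRdef, h1tR]
        refine ⟨le_trans (Metric.infDist_le_dist_of_mem hyK) hd.le, ?_⟩
        rw [hdxh y, hyd, ← hRdef, htR, hinfKα]
    rw [fK, hcp, hh, encRadius_image_lineMap x ht0, ← fK]
  constructor
  · -- first inclusion
    intro x hx
    simp only [medialAxis, Set.mem_setOf_eq] at hx
    simp only [medialAxisA, medialAxis, Set.mem_setOf_eq, ← hKα]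
    have hFR : fK K x ≤ Metric.infDist x K := fK_le_infDist K hK hKne x
    set R := Metric.infDist x K with hRdef
    have hRα : α < R := lt_of_lt_of_le hlam (le_trans hx hFR)
    have hR0 : (0:ℝ) < R := hα.trans hRα
    rw [key x hRα, div_mul_eq_mul_div, le_div_iff₀ hR0]
    nlinarith [hx, hFR, hRα, hlam]
  · -- second inclusion
    intro x hx
    simp only [medialAxisA, medialAxis, Set.mem_setOf_eq, ← hKα] at hx
    simp only [medialAxis, Set.mem_setOf_eq]
    have hF'pos : 0 < fK Kα x := lt_of_lt_of_le (by linarith) hx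
    have hxKα : x ∉ Kα := by
      intro hmem
      have h0 : Metric.infDist x Kα = 0 := Metric.infDist_zero_of_mem hmem
      have h1 := fK_le_infDist Kα hKαcl hKαne x
      rw [h0] at h1
      linarith
    have hRα : α < Metric.infDist x K := by
      by_contra hcon
      push_neg at hcon
      exact hxKα hcon
    set R := Metric.infDist x K with hRdef
    have hR0 : (0:ℝ) < R := hα.trans hRα
    have hFnn : 0 ≤ fK K x :=
      encRadius_nonneg (cp_bounded K x) (cp_nonempty K hK hKne x)
    have ht1 : (R - α) / R ≤ 1 := div_le_one_of_le₀ (by linarith) hR0.le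
    calc lam - α ≤ fK Kα x := hx
      _ = (R - α) / R * fK K x := key x hRα
      _ ≤ 1 * fK K x := mul_le_mul_of_nonneg_right ht1 hFnn
      _ = fK K x := one_mul _
end

section
/- Let K ⊆ ℝⁿ be closed. The map x ↦ 𝓕_K(x), assigning to each point the radius of the smallest enclosing ball of its set of closest points in K, is upper semi-continuous. -/
open Metric

lemma isClosed_closestPoints {n : ℕ} {K : Set (EuclideanSpace ℝ (Fin n))} (hK : IsClosed K)
    (x : EuclideanSpace ℝ (Fin n)) : IsClosed (closestPoints K x) := by
  have h : closestPoints K x = K ∩ (fun y => dist x y) ⁻¹' {infDist x K} := by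
    ext y; simp [closestPoints]
  rw [h]
  exact hK.inter (isClosed_singleton.preimage (continuous_const.dist continuous_id))

lemma isCompact_closestPoints {n : ℕ} {K : Set (EuclideanSpace ℝ (Fin n))} (hK : IsClosed K)
    (x : EuclideanSpace ℝ (Fin n)) : IsCompact (closestPoints K x) := by
  refine Metric.isCompact_of_isClosed_isBounded (isClosed_closestPoints hK x) ?_
  refine (Metric.isBounded_closedBall (x := x) (r := infDist x K)).subset fun y hy => ?_
  simp only [mem_closedBall, dist_comm]
  exact le_of_eq hy.2

lemma nonempty_closestPoints {n : ℕ} {K : Set (EuclideanSpace ℝ (Fin n))} (hK : IsClosed K)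
    (hne : K.Nonempty) (x : EuclideanSpace ℝ (Fin n)) : (closestPoints K x).Nonempty := by
  obtain ⟨y, hyK, hy⟩ := hK.exists_infDist_eq_dist hne x
  exact ⟨y, hyK, hy.symm⟩

lemma closest_subset_thickening {n : ℕ} {K : Set (EuclideanSpace ℝ (Fin n))} (hK : IsClosed K)
    (hne : K.Nonempty) (x : EuclideanSpace ℝ (Fin n)) {ε : ℝ} (hε : 0 < ε) :
    ∃ δ > 0, ∀ y, dist y x < δ →
      closestPoints K y ⊆ thickening ε (closestPoints K x) := by
  set T := thickening ε (closestPoints K x) with hT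
  set C : ℕ → Set (EuclideanSpace ℝ (Fin n)) :=
    fun k => {z ∈ K | dist x z ≤ infDist x K + 1 / (k + 1)} \ T with hC
  by_cases h : ∃ k, C k = ∅
  · obtain ⟨k, hk⟩ := h
    refine ⟨1 / (2 * (k + 1)), by positivity, fun y hy z hz => ?_⟩
    by_contra hzT
    have hzK : z ∈ K := hz.1
    have h1 : dist x z ≤ dist x y + dist y z := dist_triangle x y z
    have h2 : dist y z = infDist y K := hz.2
    have h3 : infDist y K ≤ infDist x K + dist y x := infDist_le_infDist_add_dist
    have h4 : dist x y = dist y x := dist_comm x y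
    have h5 : dist x z ≤ infDist x K + 2 * dist y x := by
      rw [h4] at h1; linarith [h1, h2 ▸ le_refl (dist y z), h3]
    have h6 : dist x z ≤ infDist x K + 1 / (k + 1 : ℝ) := by
      have : (2 : ℝ) * dist y x < 1 / (k + 1) := by
        have hk1 : (0:ℝ) < k + 1 := by positivity
        rw [lt_div_iff₀ hk1]
        have := hy
        rw [lt_div_iff₀ (by positivity : (0:ℝ) < 2 * (k + 1))] at this
        linarith
      linarith
    have : z ∈ C k := ⟨⟨hzK, h6⟩, hzT⟩
    rw [hk] at this
    exact this
  · exfalso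
    push_neg at h
    have hCne : ∀ k, (C k).Nonempty := h
    have hTopen : IsOpen T := isOpen_thickening
    have hAclosed : ∀ k : ℕ, IsClosed {z ∈ K | dist x z ≤ infDist x K + 1 / (k + 1)} := by
      intro k
      have : {z ∈ K | dist x z ≤ infDist x K + 1 / (k + 1)} =
          K ∩ (fun z => dist x z) ⁻¹' Set.Iic (infDist x K + 1 / (k + 1)) := by
        ext z; simp
      rw [this]
      exact hK.inter (isClosed_Iic.preimage (continuous_const.dist continuous_id))
    have hCclosed : ∀ k, IsClosed (C k) := fun k => (hAclosed k).sdiff hTopen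
    have hCsub : ∀ k, C (k + 1) ⊆ C k := by
      intro k z hz
      refine ⟨⟨hz.1.1, hz.1.2.trans ?_⟩, hz.2⟩
      have h7 : (1 : ℝ) / ((k:ℝ) + 1 + 1) ≤ 1 / ((k:ℝ) + 1) := by
        apply div_le_div_of_nonneg_left (by norm_num) (by positivity)
        linarith
      push_cast
      linarith
    have hC0 : IsCompact (C 0) := by
      refine Metric.isCompact_of_isClosed_isBounded (hCclosed 0) ?_
      refine (Metric.isBounded_closedBall (x := x) (r := infDist x K + 1)).subset fun z hz => ?_
      simp only [mem_closedBall, dist_comm]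
      have := hz.1.2
      norm_num at this
      linarith
    obtain ⟨z, hz⟩ := IsCompact.nonempty_iInter_of_sequence_nonempty_isCompact_isClosed C
      hCsub hCne hC0 hCclosed
    simp only [Set.mem_iInter] at hz
    have hzK : z ∈ K := (hz 0).1.1
    have hle : dist x z ≤ infDist x K := by
      refine le_of_forall_pos_le_add fun η hη => ?_
      obtain ⟨k, hk⟩ := exists_nat_one_div_lt hη
      have := (hz k).1.2
      have hk' : (1:ℝ) / (k + 1) ≤ η := le_of_lt hk
      linarith
    have hge : infDist x K ≤ dist x z := infDist_le_dist_of_mem hzK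
    have hzΘ : z ∈ closestPoints K x := ⟨hzK, le_antisymm hle hge⟩
    exact (hz 0).2 (self_subset_thickening hε _ hzΘ)

/-- The map `x ↦ 𝓕_K(x)` is upper semi-continuous. -/
theorem upperSemicontinuous_fK
    {n : ℕ} (K : Set (EuclideanSpace ℝ (Fin n))) (hK : IsClosed K) :
    UpperSemicontinuous (fun x => encRadius (closestPoints K x)) := by
  rcases K.eq_empty_or_nonempty with rfl | hne
  · have : ∀ x, closestPoints (∅ : Set (EuclideanSpace ℝ (Fin n))) x = ∅ := by
      intro x; ext y; simp [closestPoints]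
    simp only [this]
    exact continuous_const.upperSemicontinuous
  intro x r hr
  -- pick a good center c
  have hr' : encRadius (closestPoints K x) < r := hr
  obtain ⟨c, hc⟩ : ∃ c, sSup ((fun y => dist c y) '' closestPoints K x) < r :=
    exists_lt_of_ciInf_lt hr'
  set M := sSup ((fun y => dist c y) '' closestPoints K x) with hM
  set ε := (r - M) / 2 with hε
  have hεpos : 0 < ε := by simp only [hε]; linarith
  obtain ⟨δ, hδ, hδh⟩ := closest_subset_thickening hK hne x hεpos
  have hbddx : BddAbove ((fun y => dist c y) '' closestPoints K x) :=
    ((isCompact_closestPoints hK x).image (continuous_const.dist continuous_id)).bddAbove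
  filter_upwards [Metric.ball_mem_nhds x hδ] with y hy
  have hsub : closestPoints K y ⊆ thickening ε (closestPoints K x) :=
    hδh y (by simpa [mem_ball] using hy)
  have hΘy := nonempty_closestPoints hK hne y
  have hboundy : ∀ z ∈ closestPoints K y, dist c z ≤ M + ε := by
    intro z hz
    obtain ⟨w, hw, hwd⟩ := Metric.mem_thickening_iff.1 (hsub hz)
    have h1 : dist c w ≤ M := le_csSup hbddx ⟨w, hw, rfl⟩
    have h2 : dist c z ≤ dist c w + dist w z := dist_triangle c w z
    rw [dist_comm w z] at h2
    linarith [le_of_lt hwd]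
  have hsupy : sSup ((fun y => dist c y) '' closestPoints K y) ≤ M + ε := by
    refine csSup_le (hΘy.image _) ?_
    rintro _ ⟨z, hz, rfl⟩
    exact hboundy z hz
  have hbdd : BddBelow (Set.range fun c' : EuclideanSpace ℝ (Fin n) =>
      sSup ((fun y => dist c' y) '' closestPoints K y)) := by
    refine ⟨0, ?_⟩
    rintro _ ⟨c', rfl⟩
    obtain ⟨z, hz⟩ := hΘy
    have hb : BddAbove ((fun y => dist c' y) '' closestPoints K y) :=
      ((isCompact_closestPoints hK y).image (continuous_const.dist continuous_id)).bddAbove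
    exact le_trans dist_nonneg (le_csSup hb ⟨z, hz, rfl⟩)
  calc encRadius (closestPoints K y) ≤ sSup ((fun y' => dist c y') '' closestPoints K y) :=
        ciInf_le hbdd c
    _ ≤ M + ε := hsupy
    _ < r := by simp only [hε]; linarith
end

section
/- Let K ⊆ ℝⁿ be closed and x ∉ K. Then ‖∇_K(x)‖² = 1 − (𝓕_K(x)/R_K(x))², where ∇_K(x) = (x − c)/R_K(x) with c the center of the smallest ball enclosing Θ_K(x). -/
open Metric

/-- `c` is the center and `F` the radius of the smallest enclosing ball of `S`. -/
def isSmallestEnclosing {n : ℕ} (S : Set (EuclideanSpace ℝ (Fin n)))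
    (c : EuclideanSpace ℝ (Fin n)) (F : ℝ) : Prop :=
  S ⊆ Metric.closedBall c F ∧
    ∀ (c' : EuclideanSpace ℝ (Fin n)) (F' : ℝ), S ⊆ Metric.closedBall c' F' → F ≤ F'

/-- If every point of a nonempty set `S` satisfies `‖y - c'‖² ≤ s`, then the squared
radius of the smallest enclosing ball of `S` is at most `s`. -/
lemma sqBound {n : ℕ} {S : Set (EuclideanSpace ℝ (Fin n))} (hS : S.Nonempty)
    {c : EuclideanSpace ℝ (Fin n)} {F : ℝ} (hc : isSmallestEnclosing S c F)
    (c' : EuclideanSpace ℝ (Fin n)) (s : ℝ) (h : ∀ y ∈ S, ‖y - c'‖ ^ 2 ≤ s) :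
    F ^ 2 ≤ s := by
  obtain ⟨y₀, hy₀⟩ := hS
  have hF0 : 0 ≤ F := le_trans dist_nonneg (hc.1 hy₀)
  have hsub : S ⊆ Metric.closedBall c' (Real.sqrt s) := by
    intro y hy
    have hdy : dist y c' = Real.sqrt (‖y - c'‖ ^ 2) := by
      rw [Real.sqrt_sq (norm_nonneg _), dist_eq_norm]
    rw [Metric.mem_closedBall, hdy]
    exact Real.sqrt_le_sqrt (h y hy)
  have hle := hc.2 c' _ hsub
  have hs0 : 0 ≤ s := le_trans (sq_nonneg _) (h y₀ hy₀)
  calc F ^ 2 ≤ Real.sqrt s ^ 2 := by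
        exact pow_le_pow_left₀ hF0 hle 2
    _ = s := Real.sq_sqrt hs0

set_option maxHeartbeats 1000000 in
/-- `‖∇_K(x)‖² = 1 − (𝓕_K(x)/R_K(x))²`, where `∇_K(x) = (x − c)/R_K(x)` and `c`
is the center of the smallest enclosing ball of `Θ_K(x)`. -/
theorem norm_grad_sq_eq
    {n : ℕ} (K : Set (EuclideanSpace ℝ (Fin n)))
    (hK : IsClosed K) (hKne : K.Nonempty)
    (x : EuclideanSpace ℝ (Fin n)) (hx : x ∉ K)
    (c : EuclideanSpace ℝ (Fin n)) (F : ℝ)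
    (hc : isSmallestEnclosing (closestPoints K x) c F) :
    ‖(Metric.infDist x K)⁻¹ • (x - c)‖ ^ 2 = 1 - (F / Metric.infDist x K) ^ 2 := by
  classical
  set R := Metric.infDist x K with hRdef
  have hR : 0 < R := (hK.notMem_iff_infDist_pos hKne).mp hx
  obtain ⟨y₀, hy₀K, hy₀d⟩ := hK.exists_infDist_eq_dist hKne x
  have hy₀ : y₀ ∈ closestPoints K x := ⟨hy₀K, hy₀d.symm⟩
  have hΘne : (closestPoints K x).Nonempty := ⟨y₀, hy₀⟩
  have hF0 : 0 ≤ F := le_trans dist_nonneg (hc.1 hy₀)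
  have hsph : ∀ y ∈ closestPoints K x, ‖x - y‖ = R := by
    intro y hy; rw [← dist_eq_norm]; exact hy.2
  set v := x - c with hv
  set d := ‖v‖ with hd
  have hd0 : 0 ≤ d := norm_nonneg v
  -- Polarization-type identity for points of Θ
  have hpol : ∀ y ∈ closestPoints K x,
      R ^ 2 = d ^ 2 - 2 * (inner ℝ v (y - c) : ℝ) + ‖y - c‖ ^ 2 := by
    intro y hy
    have hxy : x - y = v - (y - c) := by rw [hv]; abel
    have := hsph y hy
    rw [hxy] at this
    rw [← this, norm_sub_sq_real]
  have hqF : ∀ y ∈ closestPoints K x, ‖y - c‖ ^ 2 ≤ F ^ 2 := by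
    intro y hy
    have h1 : ‖y - c‖ ≤ F := by rw [← dist_eq_norm]; exact hc.1 hy
    exact pow_le_pow_left₀ (norm_nonneg _) h1 2
  -- Part B : (1-t) d² ≤ R² - F² for t ∈ (0,1)
  have hB : ∀ t ∈ Set.Ioo (0:ℝ) 1, (1 - t) * d ^ 2 ≤ R ^ 2 - F ^ 2 := by
    intro t ht
    have hmin := sqBound hΘne hc (c + t • v)
        ((1 - t) * F ^ 2 + t * R ^ 2 - t * (1 - t) * d ^ 2) ?_
    · nlinarith [ht.1, ht.2]
    · intro y hy
      have hq := hqF y hy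
      have hp := hpol y hy
      have he : y - (c + t • v) = (y - c) - t • v := by abel
      have hnorm : ‖y - (c + t • v)‖ ^ 2
          = ‖y - c‖ ^ 2 - 2 * (t * (inner ℝ v (y - c) : ℝ)) + t ^ 2 * d ^ 2 := by
        rw [he, norm_sub_sq_real, real_inner_smul_right, norm_smul,
          Real.norm_eq_abs, mul_pow, sq_abs, real_inner_comm]
      rw [hnorm]
      nlinarith [ht.1, ht.2]
  -- From part B : d² ≤ R² - F²
  have hBle : d ^ 2 ≤ R ^ 2 - F ^ 2 := by
    by_contra hcon
    push_neg at hcon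
    set ε := d ^ 2 - (R ^ 2 - F ^ 2) with hε
    have hεpos : 0 < ε := by rw [hε]; linarith
    have hd2pos : 0 < d ^ 2 := by
      rcases eq_or_lt_of_le (sq_nonneg d) with h0 | h0
      · exfalso
        have := hB (1/2) (by norm_num)
        rw [← h0] at this
        simp at this
        linarith
      · exact h0
    set t := min (1/2) (ε / (2 * d ^ 2)) with htdef
    have ht1 : 0 < t := lt_min (by norm_num) (by positivity)
    have ht2 : t < 1 := lt_of_le_of_lt (min_le_left _ _) (by norm_num)
    have ht3 : t ≤ ε / (2 * d ^ 2) := min_le_right _ _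
    have := hB t ⟨ht1, ht2⟩
    have htd : t * d ^ 2 ≤ ε / 2 := by
      have h1 : t * d ^ 2 ≤ ε / (2 * d ^ 2) * d ^ 2 :=
        mul_le_mul_of_nonneg_right ht3 hd2pos.le
      have h2 : ε / (2 * d ^ 2) * d ^ 2 = ε / 2 := by rw [div_mul_eq_mul_div, div_eq_div_iff (mul_pos two_pos hd2pos).ne' two_ne_zero]; ring
      linarith
    nlinarith
  -- Part A : R² - F² ≤ d²
  have hclosed : IsClosed (closestPoints K x) := by
    have heq : closestPoints K x = K ∩ {y | dist x y = R} := rfl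
    rw [heq]
    exact hK.inter (isClosed_eq (continuous_const.dist continuous_id) continuous_const)
  have hsub : closestPoints K x ⊆ Metric.closedBall x R := by
    intro y hy
    rw [Metric.mem_closedBall, dist_comm]
    exact le_of_eq hy.2
  have hcomp : IsCompact (closestPoints K x) :=
    (isCompact_closedBall x R).of_isClosed_subset hclosed hsub
  have hfcont : Continuous fun y : EuclideanSpace ℝ (Fin n) => (inner ℝ v (y - c) : ℝ) :=
    Continuous.inner continuous_const (continuous_id.sub continuous_const)
  obtain ⟨y₁, hy₁Θ, hy₁max⟩ := hcomp.exists_isMaxOn hΘne hfcont.continuousOn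
  have hAle : R ^ 2 - F ^ 2 ≤ d ^ 2 := by
    rcases le_or_gt 0 (inner ℝ v (y₁ - c) : ℝ) with hpos | hneg
    · have hp := hpol y₁ hy₁Θ
      have hq := hqF y₁ hy₁Θ
      nlinarith
    · exfalso
      set δ := -(inner ℝ v (y₁ - c) : ℝ) with hδ
      have hδpos : 0 < δ := by rw [hδ]; linarith
      have hdpos : 0 < d := by
        rcases eq_or_lt_of_le hd0 with h0 | h0
        · exfalso
          have hv0 : v = 0 := by rwa [eq_comm, norm_eq_zero] at h0
          rw [hv0] at hneg
          simp at hneg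
        · exact h0
      set t := δ / d ^ 2 with htdef
      have hmin := sqBound hΘne hc (c - t • v) (F ^ 2 - δ ^ 2 / d ^ 2) ?_
      · have : 0 < δ ^ 2 / d ^ 2 := by positivity
        linarith
      · intro y hy
        have hq := hqF y hy
        have hle0 : (inner ℝ v (y - c) : ℝ) ≤ (inner ℝ v (y₁ - c) : ℝ) := hy₁max hy
        have hle : (inner ℝ v (y - c) : ℝ) ≤ -δ := by rw [hδ]; linarith
        have he : y - (c - t • v) = (y - c) + t • v := by abel
        have hnorm : ‖y - (c - t • v)‖ ^ 2
            = ‖y - c‖ ^ 2 + 2 * (t * (inner ℝ v (y - c) : ℝ)) + t ^ 2 * d ^ 2 := by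
          rw [he, norm_add_sq_real, real_inner_smul_right, norm_smul,
            Real.norm_eq_abs, mul_pow, sq_abs, real_inner_comm]
        rw [hnorm]
        have ht : t = δ / d ^ 2 := htdef
        have hd2 : (0:ℝ) < d ^ 2 := by positivity
        have htval : t * d ^ 2 = δ := by
          rw [ht, div_mul_cancel₀]; exact ne_of_gt hd2
        have htpos : 0 < t := by rw [ht]; positivity
        have h2 : t ^ 2 * d ^ 2 = δ ^ 2 / d ^ 2 := by
          rw [ht]; field_simp
        nlinarith
  have key : d ^ 2 = R ^ 2 - F ^ 2 := le_antisymm hBle hAle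
  have hns : ‖R⁻¹ • v‖ = R⁻¹ * d := by
    rw [norm_smul, Real.norm_eq_abs, abs_of_pos (inv_pos.mpr hR)]
  rw [hns]
  field_simp
  nlinarith [key, hR]
end

section
/- Let S be a bounded subset of the sphere of radius R centered at x in ℝⁿ, let c be the center of the smallest enclosing ball of S and F its radius. Then ‖x − c‖² = R² − F². -/
open Metric

/-- For a bounded nonempty subset `S` of the sphere of radius `R` around `x`, the center `c`
and radius `F` of the smallest ball enclosing `S` satisfy `‖x − c‖² = R² − F²`. -/
theorem dist_center_smallest_enclosing_sq
    {n : ℕ} (S : Set (EuclideanSpace ℝ (Fin n))) (hSne : S.Nonempty)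
    (hSb : Bornology.IsBounded S)
    (x : EuclideanSpace ℝ (Fin n)) (R : ℝ) (hS : S ⊆ Metric.sphere x R)
    (c : EuclideanSpace ℝ (Fin n)) (F : ℝ) (hc : isSmallestEnclosing S c F) :
    ‖x - c‖ ^ 2 = R ^ 2 - F ^ 2 := by
  obtain ⟨hball, hmin⟩ := hc
  obtain ⟨s₀, hs₀⟩ := hSne
  have hF0 : 0 ≤ F := le_trans dist_nonneg (hball hs₀)
  set d2 : ℝ := ‖x - c‖ ^ 2 with hd2
  have hd2nn : 0 ≤ d2 := sq_nonneg _
  -- key inequality from minimality with perturbed center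
  have key : ∀ t : ℝ, t < 1 → F ^ 2 ≤ (1 - t) * F ^ 2 + t * (R ^ 2 - d2) + t ^ 2 * d2 := by
    intro t ht
    set c' : EuclideanSpace ℝ (Fin n) := c + t • (x - c) with hc'
    set M : ℝ := (1 - t) * F ^ 2 + t * (R ^ 2 - d2) + t ^ 2 * d2 with hM
    have hsub : ∀ s ∈ S, ‖s - c'‖ ^ 2 ≤ M := by
      intro s hs
      have hR : ‖s - x‖ = R := by
        have := hS hs
        simpa [mem_sphere_iff_norm] using this
      have hF : ‖s - c‖ ≤ F := by
        have := hball hs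
        simpa [Metric.mem_closedBall, dist_eq_norm] using this
      have hsq : ‖s - c‖ ^ 2 ≤ F ^ 2 := by nlinarith [norm_nonneg (s - c)]
      have hexp : s - c' = (s - c) - t • (x - c) := by
        rw [hc']; abel
      have e1 : ‖(s - c) - t • (x - c)‖ ^ 2
          = ‖s - c‖ ^ 2 - 2 * t * (inner ℝ (s - c) (x - c) : ℝ) + t ^ 2 * ‖x - c‖ ^ 2 := by
        rw [norm_sub_sq_real, real_inner_smul_right, norm_smul]
        simp [mul_pow]
        ring
      have e2 : R ^ 2 = ‖s - c‖ ^ 2 - 2 * (inner ℝ (s - c) (x - c) : ℝ) + ‖x - c‖ ^ 2 := by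
        have h : s - x = (s - c) - (x - c) := by abel
        rw [← hR, h, norm_sub_sq_real]
      have hI : 2 * (inner ℝ (s - c) (x - c) : ℝ) = ‖s - c‖ ^ 2 + d2 - R ^ 2 := by
        rw [hd2]; linarith [e2]
      have hprod : 0 ≤ (1 - t) * (F ^ 2 - ‖s - c‖ ^ 2) :=
        mul_nonneg (by linarith) (by linarith)
      have e3 : ‖s - c‖ ^ 2 - 2 * t * (inner ℝ (s - c) (x - c) : ℝ) + t ^ 2 * ‖x - c‖ ^ 2
          = (1 - t) * ‖s - c‖ ^ 2 + t * (R ^ 2 - d2) + t ^ 2 * d2 := by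
        rw [hd2]; linear_combination (-t) * hI
      rw [hexp, e1, e3, hM]
      nlinarith [hprod]
    have hM0 : 0 ≤ M := le_trans (sq_nonneg _) (hsub s₀ hs₀)
    have hsubset : S ⊆ Metric.closedBall c' (Real.sqrt M) := by
      intro s hs
      rw [Metric.mem_closedBall, dist_eq_norm]
      have := hsub s hs
      nlinarith [Real.sq_sqrt hM0, Real.sqrt_nonneg M, norm_nonneg (s - c')]
    have hFle : F ≤ Real.sqrt M := hmin c' (Real.sqrt M) hsubset
    nlinarith [Real.sq_sqrt hM0, Real.sqrt_nonneg M]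
  have h1 : ∀ t : ℝ, 0 < t → t < 1 → F ^ 2 ≤ R ^ 2 - d2 + t * d2 := by
    intro t ht0 ht1
    have hk := key t ht1
    have hE : 0 ≤ t * (R ^ 2 - d2 + t * d2 - F ^ 2) := by nlinarith
    nlinarith [(mul_nonneg_iff_of_pos_left ht0).mp hE]
  have h2 : ∀ t : ℝ, 0 < t → t < 1 → R ^ 2 - d2 - t * d2 ≤ F ^ 2 := by
    intro t ht0 ht1
    have hk := key (-t) (by linarith)
    have hE : 0 ≤ (-t) * (R ^ 2 - d2 + (-t) * d2 - F ^ 2) := by nlinarith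
    have hE' : 0 ≤ t * (F ^ 2 - (R ^ 2 - d2 - t * d2)) := by nlinarith
    nlinarith [(mul_nonneg_iff_of_pos_left ht0).mp hE']
  have hle : F ^ 2 ≤ R ^ 2 - d2 := by
    apply le_of_forall_pos_le_add
    intro ε hε
    have htpos : 0 < min (1/2) (ε / (d2 + 1)) := by
      apply lt_min (by norm_num)
      positivity
    have h := h1 (min (1/2) (ε / (d2 + 1))) htpos (lt_of_le_of_lt (min_le_left _ _) (by norm_num))
    have h3 : min (1/2) (ε / (d2 + 1)) ≤ ε / (d2 + 1) := min_le_right _ _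
    have h4 : min (1/2) (ε / (d2 + 1)) * d2 ≤ ε := by
      have h5 : min (1/2) (ε / (d2 + 1)) * (d2 + 1) ≤ ε :=
        (le_div_iff₀ (by positivity)).mp h3
      nlinarith
    linarith
  have hge : R ^ 2 - d2 ≤ F ^ 2 := by
    apply le_of_forall_pos_le_add
    intro ε hε
    have htpos : 0 < min (1/2) (ε / (d2 + 1)) := by
      apply lt_min (by norm_num)
      positivity
    have h := h2 (min (1/2) (ε / (d2 + 1))) htpos (lt_of_le_of_lt (min_le_left _ _) (by norm_num))
    have h3 : min (1/2) (ε / (d2 + 1)) ≤ ε / (d2 + 1) := min_le_right _ _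
    have h4 : min (1/2) (ε / (d2 + 1)) * d2 ≤ ε := by
      have h5 : min (1/2) (ε / (d2 + 1)) * (d2 + 1) ≤ ε :=
        (le_div_iff₀ (by positivity)).mp h3
      nlinarith
    linarith
  linarith
end

section
/- Let f : [0,S] → ℝ be a 1-Lipschitz function with f(0) = R₀ > α + λ (λ > 0, α ≥ 0) satisfying the integral inequality f(s) ≥ f(0) + ∫₀ˢ √(1 − (λ/(f(τ)−α))²) dτ for all s ∈ (0,S], with strict inequality on a right neighborhood of 0 compared to the solution of the corresponding integral equation. Then f(s)² ≥ (S₀ + s)² + λ² + 2α·f(s) − α², i.e., (f(s) − α)² ≥ (S₀ + s)² + λ², where S₀ = √((R₀ − α)² − λ²). -/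
open Set

lemma aux_mono {lam x y : ℝ} (hlam : 0 < lam) (hy : lam ≤ y) (hxy : y ≤ x) :
    Real.sqrt (1 - (lam / y) ^ 2) ≤ Real.sqrt (1 - (lam / x) ^ 2) := by
  have hy0 : 0 < y := hlam.trans_le hy
  have hx0 : 0 < x := hy0.trans_le hxy
  apply Real.sqrt_le_sqrt
  have h1 : lam / x ≤ lam / y := div_le_div_of_nonneg_left hlam.le hy0 hxy
  have h2 : 0 ≤ lam / x := by positivity
  nlinarith

lemma aux_strict {lam x y : ℝ} (hlam : 0 < lam) (hy : lam ≤ y) (hxy : y < x) :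
    Real.sqrt (1 - (lam / y) ^ 2) < Real.sqrt (1 - (lam / x) ^ 2) := by
  have hy0 : 0 < y := hlam.trans_le hy
  have hx0 : 0 < x := hy0.trans hxy
  apply Real.sqrt_lt_sqrt
  · have h3 : lam / y ≤ 1 := (div_le_one hy0).mpr hy
    have h2 : 0 ≤ lam / y := by positivity
    nlinarith
  · have h1 : lam / x < lam / y := div_lt_div_of_pos_left hlam hy0 hxy
    have h2 : 0 < lam / x := by positivity
    nlinarith

lemma aux_hasDeriv (S₀ lam α : ℝ) (hlam : 0 < lam) (hS₀ : 0 ≤ S₀) {τ : ℝ} (hτ : 0 ≤ τ) :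
    HasDerivAt (fun s => Real.sqrt ((S₀ + s) ^ 2 + lam ^ 2) + α)
      (Real.sqrt (1 - (lam / Real.sqrt ((S₀ + τ) ^ 2 + lam ^ 2)) ^ 2)) τ := by
  have hpos : 0 < (S₀ + τ) ^ 2 + lam ^ 2 := by positivity
  have hsq : 0 < Real.sqrt ((S₀ + τ) ^ 2 + lam ^ 2) := Real.sqrt_pos.mpr hpos
  have hu : HasDerivAt (fun s : ℝ => (S₀ + s) ^ 2 + lam ^ 2) (2 * (S₀ + τ)) τ := by
    have := (((hasDerivAt_id τ).const_add S₀).pow 2).add_const (lam ^ 2)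
    simpa using this
  have h := (Real.hasDerivAt_sqrt hpos.ne').comp τ hu
  have final : HasDerivAt (fun s => Real.sqrt ((S₀ + s) ^ 2 + lam ^ 2) + α)
      (1 / (2 * Real.sqrt ((S₀ + τ) ^ 2 + lam ^ 2)) * (2 * (S₀ + τ))) τ := h.add_const α
  have hs2 : Real.sqrt ((S₀ + τ) ^ 2 + lam ^ 2) ^ 2 = (S₀ + τ) ^ 2 + lam ^ 2 :=
    Real.sq_sqrt hpos.le
  have hval : 1 - (lam / Real.sqrt ((S₀ + τ) ^ 2 + lam ^ 2)) ^ 2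
      = ((S₀ + τ) / Real.sqrt ((S₀ + τ) ^ 2 + lam ^ 2)) ^ 2 := by
    field_simp
    linarith
  have heq : Real.sqrt (1 - (lam / Real.sqrt ((S₀ + τ) ^ 2 + lam ^ 2)) ^ 2)
      = 1 / (2 * Real.sqrt ((S₀ + τ) ^ 2 + lam ^ 2)) * (2 * (S₀ + τ)) := by
    rw [hval, Real.sqrt_sq (by positivity)]
    field_simp
  rw [heq]; exact final

/-- Comparison lemma for the distance along flow trajectories: a `1`-Lipschitz function
dominating the Volterra integral equation of `R₀(s) = √((S₀+s)² + λ²) + α` from above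
satisfies `(f(s) − α)² ≥ (S₀ + s)² + λ²`. -/
theorem sq_lower_bound_of_integral_inequality
    (S α lam R₀ S₀ : ℝ) (hS : 0 < S) (hα : 0 ≤ α) (hlam : 0 < lam)
    (f : ℝ → ℝ)
    (hf : LipschitzOnWith 1 f (Icc 0 S))
    (hf0 : f 0 = R₀) (hR₀ : α + lam < R₀)
    (hS₀ : S₀ = Real.sqrt ((R₀ - α) ^ 2 - lam ^ 2))
    (hint : ∀ s ∈ Ioc (0:ℝ) S,
      f 0 + ∫ τ in (0:ℝ)..s, Real.sqrt (1 - (lam / (f τ - α)) ^ 2) ≤ f s)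
    (hstrict : ∃ δ' > (0:ℝ), ∀ s ∈ Ioo (0:ℝ) δ', s ≤ S →
      Real.sqrt ((S₀ + s) ^ 2 + lam ^ 2) + α < f s) :
    ∀ s ∈ Icc (0:ℝ) S, (S₀ + s) ^ 2 + lam ^ 2 ≤ (f s - α) ^ 2 := by
  have hS₀sq : S₀ ^ 2 = (R₀ - α) ^ 2 - lam ^ 2 := by
    rw [hS₀]; exact Real.sq_sqrt (by nlinarith)
  have hS₀pos : 0 < S₀ := by
    rw [hS₀]; exact Real.sqrt_pos.mpr (by nlinarith)
  have hg0 : Real.sqrt (S₀ ^ 2 + lam ^ 2) + α = R₀ := by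
    have h : S₀ ^ 2 + lam ^ 2 = (R₀ - α) ^ 2 := by rw [hS₀sq]; ring
    rw [h, Real.sqrt_sq (by nlinarith)]; ring
  have hglam : ∀ τ : ℝ, 0 ≤ τ → lam < Real.sqrt ((S₀ + τ) ^ 2 + lam ^ 2) := by
    intro τ hτ
    calc lam = Real.sqrt (lam ^ 2) := (Real.sqrt_sq hlam.le).symm
      _ < _ := Real.sqrt_lt_sqrt (sq_nonneg lam)
          (by nlinarith [pow_pos (show (0:ℝ) < S₀ + τ by linarith) 2])
  have hGcont : Continuous fun τ : ℝ =>
      Real.sqrt (1 - (lam / Real.sqrt ((S₀ + τ) ^ 2 + lam ^ 2)) ^ 2) := by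
    apply Real.continuous_sqrt.comp
    apply continuous_const.sub
    apply Continuous.pow
    apply continuous_const.div
    · exact Real.continuous_sqrt.comp (by continuity)
    · intro τ; exact (Real.sqrt_pos.mpr (by positivity)).ne'
  have hgcont : Continuous fun s : ℝ => Real.sqrt ((S₀ + s) ^ 2 + lam ^ 2) + α :=
    (Real.continuous_sqrt.comp (by continuity)).add continuous_const
  -- Main claim
  have hmain : ∀ s ∈ Icc (0:ℝ) S, Real.sqrt ((S₀ + s) ^ 2 + lam ^ 2) + α ≤ f s := by
    by_contra hcon
    push_neg at hcon
    obtain ⟨s₀, hs₀mem, hs₀⟩ := hcon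
    obtain ⟨δ', hδ'pos, hδ'⟩ := hstrict
    have hs₀pos : 0 < s₀ := by
      rcases eq_or_lt_of_le hs₀mem.1 with h | h
      · exfalso
        rw [← h, add_zero, hg0, hf0] at hs₀
        exact lt_irrefl _ hs₀
      · exact h
    have hs₀δ : δ' ≤ s₀ := by
      by_contra h
      push_neg at h
      exact absurd (hδ' s₀ ⟨hs₀pos, h⟩ hs₀mem.2) (not_lt.mpr hs₀.le)
    set A : Set ℝ :=
      {s : ℝ | s ∈ Icc (δ' / 2) s₀ ∧ f s ≤ Real.sqrt ((S₀ + s) ^ 2 + lam ^ 2) + α} with hA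
    have hsub : Icc (δ' / 2) s₀ ⊆ Icc (0:ℝ) S :=
      Icc_subset_Icc (by linarith) hs₀mem.2
    have hAclosed : IsClosed A := by
      have hfc : ContinuousOn (fun s => f s -
          (Real.sqrt ((S₀ + s) ^ 2 + lam ^ 2) + α)) (Icc (δ' / 2) s₀) :=
        (hf.continuousOn.mono hsub).sub hgcont.continuousOn
      have h : IsClosed (Icc (δ' / 2) s₀ ∩
          (fun s => f s - (Real.sqrt ((S₀ + s) ^ 2 + lam ^ 2) + α)) ⁻¹' Iic 0) :=
        hfc.preimage_isClosed_of_isClosed isClosed_Icc isClosed_Iic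
      convert h using 1
      ext x
      simp only [hA, mem_setOf_eq, mem_inter_iff, mem_preimage, mem_Iic, sub_nonpos]
    have hAne : s₀ ∈ A := ⟨⟨by linarith, le_refl _⟩, hs₀.le⟩
    have hbdd : BddBelow A := ⟨δ' / 2, fun x hx => hx.1.1⟩
    set t := sInf A with ht
    have htA : t ∈ A := hAclosed.csInf_mem ⟨s₀, hAne⟩ hbdd
    have htmem : t ∈ Icc (δ' / 2) s₀ := htA.1
    have htle : f t ≤ Real.sqrt ((S₀ + t) ^ 2 + lam ^ 2) + α := htA.2
    have htpos : 0 < t := lt_of_lt_of_le (half_pos hδ'pos) htmem.1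
    have htS : t ≤ S := htmem.2.trans hs₀mem.2
    have hlt : ∀ τ ∈ Ioo (0:ℝ) t, Real.sqrt ((S₀ + τ) ^ 2 + lam ^ 2) + α < f τ := by
      rintro τ ⟨hτ0, hτt⟩
      by_cases hc : τ < δ'
      · exact hδ' τ ⟨hτ0, hc⟩ (hτt.le.trans htS)
      · push_neg at hc
        by_contra hcon2
        push_neg at hcon2
        have hτA : τ ∈ A := ⟨⟨by linarith, by linarith [htmem.2]⟩, hcon2⟩
        have := csInf_le hbdd hτA
        linarith
    have hge : ∀ τ ∈ Icc (0:ℝ) t, Real.sqrt ((S₀ + τ) ^ 2 + lam ^ 2) + α ≤ f τ := by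
      rintro τ ⟨hτ0, hτt⟩
      rcases eq_or_lt_of_le hτ0 with h0 | h0
      · rw [← h0, add_zero, hg0, hf0]
      rcases eq_or_lt_of_le hτt with h1 | h1
      · rw [h1]
        have hne : (nhdsWithin t (Ioo (0:ℝ) t)).NeBot := by
          rw [← mem_closure_iff_nhdsWithin_neBot, closure_Ioo (ne_of_lt htpos)]
          exact ⟨htpos.le, le_rfl⟩
        have hfc : ContinuousWithinAt f (Ioo (0:ℝ) t) t :=
          (hf.continuousOn t ⟨htpos.le, htS⟩).mono
            (fun x hx => ⟨hx.1.le, hx.2.le.trans htS⟩)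
        have hgc : ContinuousWithinAt
            (fun s => Real.sqrt ((S₀ + s) ^ 2 + lam ^ 2) + α) (Ioo (0:ℝ) t) t :=
          hgcont.continuousWithinAt
        have htend := hfc.sub hgc
        have h0le : 0 ≤ f t - (Real.sqrt ((S₀ + t) ^ 2 + lam ^ 2) + α) :=
          ge_of_tendsto htend
            (eventually_mem_nhdsWithin.mono fun x hx => sub_nonneg.mpr (hlt x hx).le)
        linarith
      · exact (hlt τ ⟨h0, h1⟩).le
    -- comparison of integrands
    have hsub' : Icc (0:ℝ) t ⊆ Icc (0:ℝ) S := Icc_subset_Icc le_rfl htS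
    have hGF : ∀ τ ∈ Ioc (0:ℝ) t,
        Real.sqrt (1 - (lam / Real.sqrt ((S₀ + τ) ^ 2 + lam ^ 2)) ^ 2)
          ≤ Real.sqrt (1 - (lam / (f τ - α)) ^ 2) := by
      rintro τ ⟨h0, h1⟩
      exact aux_mono hlam (hglam τ h0.le).le (by linarith [hge τ ⟨h0.le, h1⟩])
    have hGFc : Real.sqrt (1 - (lam / Real.sqrt ((S₀ + t / 2) ^ 2 + lam ^ 2)) ^ 2)
        < Real.sqrt (1 - (lam / (f (t / 2) - α)) ^ 2) :=
      aux_strict hlam (hglam _ (by linarith)).le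
        (by linarith [hlt (t / 2) ⟨by linarith, by linarith⟩])
    have hFc : ContinuousOn (fun τ => Real.sqrt (1 - (lam / (f τ - α)) ^ 2))
        (Icc (0:ℝ) t) := by
      apply Real.continuous_sqrt.comp_continuousOn
      apply continuousOn_const.sub
      apply ContinuousOn.pow
      apply ContinuousOn.div continuousOn_const
        ((hf.continuousOn.mono hsub').sub continuousOn_const)
      intro τ hτ
      have h1 := hge τ hτ
      have h2 := hglam τ hτ.1
      intro hzero
      change f τ - α = 0 at hzero
      rw [sub_eq_zero] at hzero
      nlinarith
    have hstrictInt :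
        (∫ τ in (0:ℝ)..t,
            Real.sqrt (1 - (lam / Real.sqrt ((S₀ + τ) ^ 2 + lam ^ 2)) ^ 2))
          < ∫ τ in (0:ℝ)..t, Real.sqrt (1 - (lam / (f τ - α)) ^ 2) :=
      intervalIntegral.integral_lt_integral_of_continuousOn_of_le_of_exists_lt htpos
        hGcont.continuousOn hFc hGF
        ⟨t / 2, ⟨by linarith, by linarith⟩, hGFc⟩
    have hFTC :
        (∫ τ in (0:ℝ)..t,
            Real.sqrt (1 - (lam / Real.sqrt ((S₀ + τ) ^ 2 + lam ^ 2)) ^ 2))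
          = (Real.sqrt ((S₀ + t) ^ 2 + lam ^ 2) + α) - R₀ := by
      have h := intervalIntegral.integral_eq_sub_of_hasDerivAt
        (f := fun s => Real.sqrt ((S₀ + s) ^ 2 + lam ^ 2) + α)
        (f' := fun τ => Real.sqrt (1 - (lam / Real.sqrt ((S₀ + τ) ^ 2 + lam ^ 2)) ^ 2))
        (a := (0:ℝ)) (b := t)
        (fun τ hτ => by
          rw [uIcc_of_le htpos.le] at hτ
          exact aux_hasDeriv S₀ lam α hlam hS₀pos.le hτ.1)
        (hGcont.intervalIntegrable 0 t)
      rw [h]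
      simp only [add_zero]
      rw [hg0]
    have hintt := hint t ⟨htpos, htS⟩
    rw [hf0] at hintt
    linarith
  -- conclude
  intro s hs
  have h1 := hmain s hs
  have h2 : 0 ≤ Real.sqrt ((S₀ + s) ^ 2 + lam ^ 2) := Real.sqrt_nonneg _
  have h3 : Real.sqrt ((S₀ + s) ^ 2 + lam ^ 2) ^ 2 = (S₀ + s) ^ 2 + lam ^ 2 :=
    Real.sq_sqrt (by positivity)
  nlinarith
end
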